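/- arXiv:1710.06008 — 3 statements merged into one kernel-verified Lean document; each statement's English description precedes it below -/
import Mathlib

section
/- Let Z be a symmetric positive semidefinite N×N matrix with nonnegative entries such that Z 1_N = 1_N and Tr(Z) = k, and suppose Z is block diagonal with respect to a partition of {1,...,N} into k blocks (i.e., Z_{ij} = 0 whenever i and j lie in different blocks). Then each diagonal block of Z equals (1/n_a) J_{n_a×n_a}, where n_a is the size of block a and J is the all-ones matrix; in particular Z = sum_a (1/n_a) 1_{Γ_a} 1_{Γ_a}^T. -/
/-!
The matrix `P = ∑ₐ nₐ⁻¹ 1_{Γₐ} 1_{Γₐ}ᵀ` is the orthogonal projection onto the span of the block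
indicators. Block diagonality and unit row sums say that `Z` fixes every block indicator, so
`Z P = P = P Z`, and hence `Z - P = (1 - P) Z (1 - P)` is positive semidefinite. Its trace is
`k - k = 0`, which forces `Z = P`.
-/

open scoped BigOperators Matrix

namespace Matrix

open Finset

variable {ι κ : Type*} (R : Type*) [DecidableEq κ]

def assignmentMatrix [Zero R] [One R] (g : ι → κ) : Matrix ι κ R :=
  Matrix.of fun i a => if g i = a then 1 else 0

variable {R}

@[simp]
lemma assignmentMatrix_apply [Zero R] [One R] (g : ι → κ) (i : ι) (a : κ) :
    assignmentMatrix R g i a = if g i = a then 1 else 0 :=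
  rfl

variable [Fintype ι]

lemma transpose_assignmentMatrix_mul_self [NonAssocSemiring R] (g : ι → κ) :
    (assignmentMatrix R g)ᵀ * assignmentMatrix R g =
      diagonal fun a => ((univ.filter fun i => g i = a).card : R) := by
  ext a b
  by_cases hab : a = b
  · subst hab
    simp [Matrix.mul_apply, ← ite_and, sum_boole]
  · have hne : ∀ i, ¬ (g i = b ∧ g i = a) := fun i h => hab (h.2.symm.trans h.1)
    simp [Matrix.mul_apply, ← ite_and, hne, hab]

lemma mul_assignmentMatrix_of_rowSum_eq_one [NonAssocSemiring R] {g : ι → κ}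
    {Z : Matrix ι ι R} (hblock : ∀ i j, g i ≠ g j → Z i j = 0)
    (hrow : Z *ᵥ (fun _ => (1 : R)) = fun _ => 1) :
    Z * assignmentMatrix R g = assignmentMatrix R g := by
  ext i a
  have hrow_i : ∑ l, Z i l = 1 := by simpa [mulVec, dotProduct] using congrFun hrow i
  have hterm : ∀ l, Z i l * (if g l = a then 1 else 0) = (if g i = a then 1 else 0) * Z i l := by
    intro l
    by_cases hil : g i = g l
    · simp [hil]
    · simp [hblock i l hil]
  simp only [Matrix.mul_apply, assignmentMatrix_apply, hterm, ← mul_sum, hrow_i, mul_one]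

variable [Fintype κ] (R)

/-- `∑ₐ nₐ⁻¹ 1_{Γₐ} 1_{Γₐ}ᵀ`, where `Γₐ` is the fiber of `g` over `a` and `nₐ = |Γₐ|`. -/
def clusterMatrix [DivisionRing R] (g : ι → κ) : Matrix ι ι R :=
  assignmentMatrix R g * diagonal (fun a => ((univ.filter fun i => g i = a).card : R)⁻¹) *
    (assignmentMatrix R g)ᵀ

variable {R}

lemma clusterMatrix_apply [DivisionRing R] (g : ι → κ) (i j : ι) :
    clusterMatrix R g i j =
      if g i = g j then ((univ.filter fun l => g l = g i).card : R)⁻¹ else 0 := by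
  by_cases h : g i = g j <;> simp [clusterMatrix, Matrix.mul_apply, h]

lemma mul_clusterMatrix_of_rowSum_eq_one [DivisionRing R] {g : ι → κ}
    {Z : Matrix ι ι R} (hblock : ∀ i j, g i ≠ g j → Z i j = 0)
    (hrow : Z *ᵥ (fun _ => (1 : R)) = fun _ => 1) :
    Z * clusterMatrix R g = clusterMatrix R g := by
  rw [clusterMatrix, ← Matrix.mul_assoc, ← Matrix.mul_assoc,
    mul_assignmentMatrix_of_rowSum_eq_one hblock hrow]

lemma isStarProjection_clusterMatrix [Field R] [StarRing R] [TrivialStar R] (g : ι → κ) :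
    IsStarProjection (clusterMatrix R g) where
  isIdempotentElem := by
    have hinv (c : R) : c⁻¹ * (c * c⁻¹) = c⁻¹ := by by_cases hc : c = 0 <;> simp [hc]
    simp only [IsIdempotentElem, clusterMatrix, Matrix.mul_assoc]
    simp only [← Matrix.mul_assoc (assignmentMatrix R g)ᵀ, transpose_assignmentMatrix_mul_self,
      ← Matrix.mul_assoc (diagonal _), diagonal_mul_diagonal, hinv]
  isSelfAdjoint := by
    rw [IsSelfAdjoint, star_eq_conjTranspose, conjTranspose_eq_transpose_of_trivial, clusterMatrix,
      transpose_mul, transpose_mul, transpose_transpose, diagonal_transpose, Matrix.mul_assoc]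

lemma trace_clusterMatrix [Field R] [CharZero R] {g : ι → κ} (hg : Function.Surjective g) :
    (clusterMatrix R g).trace = Fintype.card κ := by
  have hcard (a : κ) : ((univ.filter fun i => g i = a).card : R) ≠ 0 := by
    obtain ⟨i, rfl⟩ := hg a
    exact Nat.cast_ne_zero.mpr (card_ne_zero.mpr ⟨i, by simp⟩)
  rw [clusterMatrix, trace_mul_cycle, transpose_assignmentMatrix_mul_self, diagonal_mul_diagonal,
    trace_diagonal]
  simp [hcard]

lemma PosSemidef.sub_of_mul_eq_right {R ι : Type*} [Fintype ι] [DecidableEq ι] [Ring R]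
    [PartialOrder R] [StarRing R] {Z P : Matrix ι ι R} (hZ : Z.PosSemidef)
    (hP : IsStarProjection P) (hZP : Z * P = P) : (Z - P).PosSemidef := by
  have hPZ : P * Z = P := by
    simpa [hP.isSelfAdjoint.star_eq, hZ.isHermitian.isSelfAdjoint.star_eq] using congr(star $(hZP))
  have hconj : (1 - P) * Z * (1 - P)ᴴ = Z - P := by
    rw [← star_eq_conjTranspose, star_sub, star_one, hP.isSelfAdjoint.star_eq, Matrix.sub_mul,
      Matrix.one_mul, hPZ, Matrix.mul_sub, Matrix.mul_one, Matrix.sub_mul, hZP,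
      hP.isIdempotentElem.eq, sub_self, sub_zero]
  exact hconj ▸ hZ.mul_mul_conjTranspose_same (1 - P)

end Matrix

theorem block_diagonal_doubly_stochastic_psd_eq_cluster_matrix_general
    {N k : ℕ} (g : Fin N → Fin k) (hg : Function.Surjective g)
    (Z : Matrix (Fin N) (Fin N) ℝ)
    (hpsd : Z.PosSemidef)
    (hrow : Z *ᵥ (fun _ => (1 : ℝ)) = fun _ => (1 : ℝ))
    (htr : Z.trace = k)
    (hblock : ∀ i j, g i ≠ g j → Z i j = 0) :
    ∀ i j, Z i j =
      if g i = g j then ((Finset.univ.filter (fun l => g l = g i)).card : ℝ)⁻¹ else 0 := by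
  have hdiff : (Z - Matrix.clusterMatrix ℝ g).PosSemidef :=
    hpsd.sub_of_mul_eq_right (Matrix.isStarProjection_clusterMatrix g)
      (Matrix.mul_clusterMatrix_of_rowSum_eq_one hblock hrow)
  have htrace : (Z - Matrix.clusterMatrix ℝ g).trace = 0 := by
    rw [Matrix.trace_sub, htr, Matrix.trace_clusterMatrix hg, Fintype.card_fin, sub_self]
  have hZ : Z = Matrix.clusterMatrix ℝ g := sub_eq_zero.mp (hdiff.trace_eq_zero_iff.mp htrace)
  intro i j
  rw [hZ, Matrix.clusterMatrix_apply]

/-- If a symmetric PSD entrywise-nonnegative matrix `Z` with row sums one and trace `k`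
is block diagonal with respect to a partition of `{1, ..., N}` into `k` nonempty blocks
(given by the fibers of `g`), then each diagonal block equals `(1/n_a) J`, i.e.
`Z = ∑_a (1/n_a) 1_{Γ_a} 1_{Γ_a}ᵀ`. -/
theorem block_diagonal_doubly_stochastic_psd_eq_cluster_matrix
    {N k : ℕ} (g : Fin N → Fin k) (hg : Function.Surjective g)
    (Z : Matrix (Fin N) (Fin N) ℝ)
    (hpsd : Z.PosSemidef)
    (hnonneg : ∀ i j, 0 ≤ Z i j)
    (hrow : Z *ᵥ (fun _ => (1 : ℝ)) = fun _ => (1 : ℝ))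
    (htr : Z.trace = k)
    (hblock : ∀ i j, g i ≠ g j → Z i j = 0) :
    ∀ i j, Z i j =
      if g i = g j then ((Finset.univ.filter (fun l => g l = g i)).card : ℝ)⁻¹ else 0 :=
  block_diagonal_doubly_stochastic_psd_eq_cluster_matrix_general g hg Z hpsd hrow htr hblock
end

section
/- For any matrices X̄_1, ..., X̄_k with X̄_l ∈ R^{n_l × m}, form the block diagonal matrix X̂ ∈ R^{N × mk} with diagonal blocks X̄_l (N = sum n_l), and let W ∈ R^{mk × mk} be a k×k block matrix whose (a,b) block is an m×m orthogonal matrix for each a,b. Then ||X̂ W X̂^T|| ≤ (sum_{l=1}^k ||X̄_l||^2), where ||·|| denotes the operator (spectral) norm. -/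
open scoped BigOperators Matrix Matrix.Norms.L2Operator

/-!
Test the operator norm against vectors `u, v` and split `p = X̂ᵀ u`, `q = X̂ᵀ v` into their
`k` blocks of length `m`; the `a`-th block of `p` is `X̄_aᵀ u_a`. Every block of `W` is an
isometry, so `pᵀ W q ≤ ∑_{a,b} ‖p_a‖ ‖q_b‖ = (∑_a ‖p_a‖) (∑_b ‖q_b‖)`, and by Cauchy–Schwarz
`∑_a ‖p_a‖ ≤ ∑_a ‖X̄_a‖ ‖u_a‖ ≤ (∑_a ‖X̄_a‖²)^{1/2} ‖u‖`.
-/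

open Matrix WithLp

section Euclidean

variable {ι κ : Type*} [Fintype ι] [Fintype κ]

lemma norm_toLp_sq_eq_dotProduct (x : ι → ℝ) : ‖toLp 2 x‖ ^ 2 = x ⬝ᵥ x := by
  rw [← real_inner_self_eq_norm_sq, EuclideanSpace.inner_toLp_toLp, star_trivial]

lemma dotProduct_le_norm_mul_norm (x y : ι → ℝ) : x ⬝ᵥ y ≤ ‖toLp 2 x‖ * ‖toLp 2 y‖ := by
  simpa [EuclideanSpace.inner_toLp_toLp, dotProduct_comm] using
    real_inner_le_norm (toLp 2 x) (toLp 2 y)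

lemma norm_toLp_sigma {𝕜 : Type*} [RCLike 𝕜] {β : κ → Type*} [∀ a, Fintype (β a)]
    (u : (Σ a, β a) → 𝕜) : ‖toLp 2 u‖ = √(∑ a, ‖toLp 2 fun i => u ⟨a, i⟩‖ ^ 2) := by
  simp_rw [EuclideanSpace.norm_eq, Real.sq_sqrt (Finset.sum_nonneg fun _ _ => sq_nonneg _),
    Fintype.sum_sigma]

end Euclidean

namespace Matrix

section Isometry

variable {ι κ : Type*} [Fintype ι] [Fintype κ] [DecidableEq κ]

lemma norm_toLp_mulVec_of_transpose_mul_self {Q : Matrix ι κ ℝ} (hQ : Qᵀ * Q = 1) (x : κ → ℝ) :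
    ‖toLp 2 (Q *ᵥ x)‖ = ‖toLp 2 x‖ := by
  rw [← sq_eq_sq₀ (norm_nonneg _) (norm_nonneg _), norm_toLp_sq_eq_dotProduct,
    norm_toLp_sq_eq_dotProduct, dotProduct_mulVec, ← vecMul_transpose, vecMul_vecMul, hQ,
    vecMul_one]

lemma dotProduct_mulVec_le_of_transpose_mul_self {Q : Matrix ι κ ℝ} (hQ : Qᵀ * Q = 1)
    (x : ι → ℝ) (y : κ → ℝ) : x ⬝ᵥ (Q *ᵥ y) ≤ ‖toLp 2 x‖ * ‖toLp 2 y‖ :=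
  (dotProduct_le_norm_mul_norm _ _).trans_eq <| by
    rw [norm_toLp_mulVec_of_transpose_mul_self hQ]

lemma l2_opNorm_transpose [DecidableEq ι] (A : Matrix ι κ ℝ) : ‖Aᵀ‖ = ‖A‖ := by
  rw [← conjTranspose_eq_transpose_of_trivial, l2_opNorm_conjTranspose]

lemma l2_opNorm_le_of_dotProduct_mulVec_le (A : Matrix ι κ ℝ) {C : ℝ} (hC : 0 ≤ C)
    (h : ∀ u v, u ⬝ᵥ (A *ᵥ v) ≤ C * (‖toLp 2 u‖ * ‖toLp 2 v‖)) : ‖A‖ ≤ C := by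
  refine ContinuousLinearMap.opNorm_le_bound _ hC fun x => ?_
  change ‖toLp 2 (A *ᵥ ofLp x)‖ ≤ C * ‖x‖
  have hx : ‖x‖ = ‖toLp 2 (ofLp x)‖ := rfl
  set y := A *ᵥ ofLp x
  -- test against `u = A x` itself
  have hy : ‖toLp 2 y‖ * ‖toLp 2 y‖ ≤ C * ‖x‖ * ‖toLp 2 y‖ := by
    rw [← sq, norm_toLp_sq_eq_dotProduct, hx]
    linarith [h y (ofLp x)]
  rcases (norm_nonneg (toLp 2 y)).eq_or_lt with hy0 | hy0
  · rw [← hy0]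
    positivity
  · exact le_of_mul_le_mul_right hy hy0

end Isometry

section Blocks

variable {ι ι' κ κ' : Type*} [Fintype ι] [Fintype ι'] [Fintype κ] [Fintype κ']

-- `(comp ι ι' κ κ' α).symm W a b` is the `(a, b)` block `fun i j => W (a, i) (b, j)` of `W`.
lemma dotProduct_mulVec_eq_sum_comp_symm {α : Type*} [CommSemiring α]
    (W : Matrix (ι × κ) (ι' × κ') α) (p : ι × κ → α) (q : ι' × κ' → α) :
    p ⬝ᵥ (W *ᵥ q) =
      ∑ a, ∑ b, Function.curry p a ⬝ᵥ ((comp ι ι' κ κ' α).symm W a b *ᵥ Function.curry q b) := by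
  simp only [dotProduct, mulVec, Fintype.sum_prod_type, Finset.mul_sum]
  exact Finset.sum_congr rfl fun a _ => Finset.sum_comm

lemma dotProduct_mulVec_le_of_comp_symm_isometry [DecidableEq κ']
    {W : Matrix (ι × κ) (ι' × κ') ℝ}
    (hW : ∀ a b, ((comp ι ι' κ κ' ℝ).symm W a b)ᵀ * (comp ι ι' κ κ' ℝ).symm W a b = 1)
    (p : ι × κ → ℝ) (q : ι' × κ' → ℝ) :
    p ⬝ᵥ (W *ᵥ q) ≤
      (∑ a, ‖toLp 2 (Function.curry p a)‖) * ∑ b, ‖toLp 2 (Function.curry q b)‖ := by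
  rw [dotProduct_mulVec_eq_sum_comp_symm, Finset.sum_mul_sum]
  exact Finset.sum_le_sum fun a _ => Finset.sum_le_sum fun b _ =>
    dotProduct_mulVec_le_of_transpose_mul_self (hW a b) _ _

end Blocks

lemma curry_transpose_mulVec_of_blockDiagonal {ι κ α : Type*} [Fintype ι] [DecidableEq ι]
    [CommSemiring α] {β : ι → Type*} [∀ a, Fintype (β a)] (X : ∀ a, Matrix (β a) κ α)
    {Xhat : Matrix (Σ a, β a) (ι × κ) α}
    (hXhat : ∀ a i b j, Xhat ⟨a, i⟩ (b, j) = if a = b then X a i j else 0)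
    (u : (Σ a, β a) → α) (a : ι) :
    Function.curry (Xhatᵀ *ᵥ u) a = (X a)ᵀ *ᵥ fun i => u ⟨a, i⟩ := by
  funext j
  simp only [Function.curry_apply, mulVec, dotProduct, transpose_apply, Fintype.sum_sigma, hXhat]
  rw [Finset.sum_eq_single a (fun b _ hba => by simp [hba]) (by simp)]
  simp

lemma sum_norm_mulVec_le {ι : Type*} [Fintype ι] {β γ : ι → Type*} [∀ a, Fintype (β a)]
    [∀ a, DecidableEq (β a)] [∀ a, Fintype (γ a)] (A : ∀ a, Matrix (γ a) (β a) ℝ)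
    (u : (Σ a, β a) → ℝ) :
    ∑ a, ‖toLp 2 (A a *ᵥ fun i => u ⟨a, i⟩)‖ ≤ √(∑ a, ‖A a‖ ^ 2) * ‖toLp 2 u‖ := by
  rw [norm_toLp_sigma]
  calc ∑ a, ‖toLp 2 (A a *ᵥ fun i => u ⟨a, i⟩)‖
      ≤ ∑ a, ‖A a‖ * ‖toLp 2 fun i => u ⟨a, i⟩‖ :=
        Finset.sum_le_sum fun a _ => l2_opNorm_mulVec (A a) (toLp 2 fun i => u ⟨a, i⟩)
    _ ≤ _ := Real.sum_mul_le_sqrt_mul_sqrt _ _ _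

end Matrix

/-- If `X̂` is block diagonal with blocks `X̄_1, ..., X̄_k` and `W` is a `k × k` block
matrix whose `m × m` blocks are all orthogonal, then the spectral norm of
`X̂ W X̂ᵀ` is at most `∑ l, ‖X̄_l‖²`. -/
theorem blockDiagonal_conj_opNorm_le
    {k m : ℕ} (n : Fin k → ℕ)
    (Xbar : (l : Fin k) → Matrix (Fin (n l)) (Fin m) ℝ)
    (Xhat : Matrix ((l : Fin k) × Fin (n l)) (Fin k × Fin m) ℝ)
    (hXhat : ∀ (a : Fin k) (i : Fin (n a)) (b : Fin k) (j : Fin m),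
      Xhat ⟨a, i⟩ (b, j) = if h : a = b then Xbar a i j else 0)
    (W : Matrix (Fin k × Fin m) (Fin k × Fin m) ℝ)
    (hW : ∀ a b : Fin k,
      (Matrix.of (fun i j : Fin m => W (a, i) (b, j)))ᵀ *
        Matrix.of (fun i j : Fin m => W (a, i) (b, j)) = 1) :
    ‖Xhat * W * Xhatᵀ‖ ≤ ∑ l, ‖Xbar l‖ ^ 2 := by
  set S := ∑ l, ‖Xbar l‖ ^ 2
  have hS : 0 ≤ S := by positivity
  have hXhatT (u) : ∑ a, ‖toLp 2 (Function.curry (Xhatᵀ *ᵥ u) a)‖ ≤ √S * ‖toLp 2 u‖ := by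
    simp_rw [curry_transpose_mulVec_of_blockDiagonal Xbar hXhat u]
    simpa only [l2_opNorm_transpose] using sum_norm_mulVec_le (fun a => (Xbar a)ᵀ) u
  refine l2_opNorm_le_of_dotProduct_mulVec_le _ hS fun u v => ?_
  calc u ⬝ᵥ ((Xhat * W * Xhatᵀ) *ᵥ v) = (Xhatᵀ *ᵥ u) ⬝ᵥ (W *ᵥ (Xhatᵀ *ᵥ v)) := by
        rw [← mulVec_mulVec, ← mulVec_mulVec, dotProduct_mulVec, ← mulVec_transpose]
    _ ≤ (∑ a, ‖toLp 2 (Function.curry (Xhatᵀ *ᵥ u) a)‖) *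
          ∑ b, ‖toLp 2 (Function.curry (Xhatᵀ *ᵥ v) b)‖ :=
        dotProduct_mulVec_le_of_comp_symm_isometry hW _ _
    _ ≤ (√S * ‖toLp 2 u‖) * (√S * ‖toLp 2 v‖) :=
        mul_le_mul (hXhatT u) (hXhatT v) (by positivity) (by positivity)
    _ = S * (‖toLp 2 u‖ * ‖toLp 2 v‖) := by
        rw [mul_mul_mul_comm, Real.mul_self_sqrt hS]
end

section
/- Let x and y be independent standard Gaussian vectors in R^m and Ψ a fixed m×m matrix. For t ≥ 0, with probability at least 1 - 2 max{e^{-mt/8}, e^{-mt^2/8}}, one has x^T Ψ y ≤ m sqrt(t(1+t)) ||Ψ||. -/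
open scoped BigOperators Matrix Matrix.Norms.L2Operator
open MeasureTheory ProbabilityTheory

open Real
open scoped NNReal

/-!
Conditionally on `y`, the form `xᵀ Ψ y` is a centred Gaussian of variance
`‖Ψ y‖² ≤ ‖Ψ‖² ‖y‖²`. So outside the event `‖y‖² ≥ m (1 + t)` its tail beyond
`m √(t (1 + t)) ‖Ψ‖` is at most `exp (-m t / 2)`. That event is a chi-squared upper tail:
the Chernoff bound with `E exp (l g²) = (1 - 2 l)^(-1/2) ≤ exp (l + 2 l²)` for `0 ≤ l ≤ 1/4`,
at `l = min t 1 / 4`, bounds it by `max (exp (-m t / 8)) (exp (-m t² / 8))`.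
-/

lemma inv_sqrt_one_sub_two_mul_le_exp {l : ℝ} (h0 : 0 ≤ l) (h1 : l ≤ 1 / 4) :
    (√(1 - 2 * l))⁻¹ ≤ exp (l + 2 * l ^ 2) := by
  have hpos : 0 < 1 - 2 * l := by linarith
  -- `exp v ≥ 1 + v + v²/2` with `v = 2l + 4l²` already dominates `1 / (1 - 2l)`
  have hquad : 1 / (1 - 2 * l) ≤ exp (2 * (l + 2 * l ^ 2)) := by
    have h := sum_le_exp_of_nonneg (x := 2 * (l + 2 * l ^ 2)) (by positivity) 3
    simp only [Finset.sum_range_succ, Finset.sum_range_zero] at h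
    rw [div_le_iff₀ hpos]
    norm_num at h
    nlinarith [mul_nonneg h0 h0, mul_nonneg (mul_nonneg h0 h0) h0]
  calc (√(1 - 2 * l))⁻¹ = √(1 / (1 - 2 * l)) := by rw [one_div, sqrt_inv]
    _ ≤ √(exp (2 * (l + 2 * l ^ 2))) := sqrt_le_sqrt hquad
    _ = exp (l + 2 * l ^ 2) := by rw [two_mul, exp_add, sqrt_mul_self (exp_pos _).le]

namespace MeasureTheory

lemma measureReal_prod_le_add_of_forall_mem {α β : Type*}
    [MeasurableSpace α] [MeasurableSpace β] {μ : Measure α} {ν : Measure β}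
    [IsProbabilityMeasure μ] [IsProbabilityMeasure ν]
    {s : Set (α × β)} (hs : MeasurableSet s) {A : Set β} {c : ℝ} (hc : 0 ≤ c)
    (h : ∀ y ∈ A, μ.real {x | (x, y) ∈ s} ≤ c) :
    (μ.prod ν).real s ≤ c + ν.real Aᶜ := by
  have hsection (y : β) : μ {x | (x, y) ∈ s} ≤ ENNReal.ofReal c + Aᶜ.indicator 1 y := by
    by_cases hy : y ∈ A
    · exact le_add_right <|
        (ENNReal.le_ofReal_iff_toReal_le (measure_ne_top _ _) hc).2 (h y hy)
    · simpa [hy] using prob_le_one.trans le_add_self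
  have hprod : (μ.prod ν) s ≤ ENNReal.ofReal c + ν Aᶜ := calc
    (μ.prod ν) s = ∫⁻ y, μ {x | (x, y) ∈ s} ∂ν := Measure.prod_apply_symm hs
    _ ≤ ∫⁻ y, ENNReal.ofReal c + Aᶜ.indicator 1 y ∂ν := lintegral_mono hsection
    _ = ENNReal.ofReal c + ∫⁻ y, Aᶜ.indicator 1 y ∂ν := by
        rw [lintegral_add_left measurable_const, lintegral_const, measure_univ, mul_one]
    _ ≤ ENNReal.ofReal c + ν Aᶜ := by grw [lintegral_indicator_one_le]
  calc (μ.prod ν).real s ≤ (ENNReal.ofReal c + ν Aᶜ).toReal :=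
        ENNReal.toReal_mono (by finiteness) hprod
    _ = c + ν.real Aᶜ := by
        rw [ENNReal.toReal_add ENNReal.ofReal_ne_top (measure_ne_top _ _),
          ENNReal.toReal_ofReal hc, measureReal_def]

end MeasureTheory

namespace ProbabilityTheory

lemma hasSubgaussianMGF_id_gaussianReal (v : ℝ≥0) :
    HasSubgaussianMGF id v (gaussianReal 0 v) where
  integrable_exp_mul t := integrable_exp_mul_gaussianReal t
  mgf_le t := by simp [mgf_id_gaussianReal]

lemma mgf_sq_gaussianReal {l : ℝ} (hl : l < 1 / 2) :
    mgf (fun x ↦ x ^ 2) (gaussianReal 0 1) l = (√(1 - 2 * l))⁻¹ := by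
  have hpdf (x : ℝ) : gaussianPDFReal 0 1 x • exp (l * x ^ 2)
      = (√(2 * π))⁻¹ * exp (-(1 / 2 - l) * x ^ 2) := by
    simp only [gaussianPDFReal, smul_eq_mul, NNReal.coe_one, mul_one, sub_zero, mul_assoc,
      ← exp_add]
    ring_nf
  rw [mgf, integral_gaussianReal_eq_integral_smul one_ne_zero]
  simp_rw [hpdf]
  rw [integral_const_mul, integral_gaussian, ← sqrt_inv, ← sqrt_mul (by positivity), ← sqrt_inv]
  congr 1
  have : 1 - 2 * l ≠ 0 := by linarith
  have : 1 / 2 - l ≠ 0 := by linarith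
  field_simp

section Pi

variable {ι : Type*} [Fintype ι]

lemma mgf_sum_sq_pi_gaussianReal {l : ℝ} (hl : l < 1 / 2) :
    mgf (fun y ↦ ∑ i, y i ^ 2) (Measure.pi fun _ : ι ↦ gaussianReal 0 1) l
      = (√(1 - 2 * l))⁻¹ ^ Fintype.card ι := by
  simp_rw [mgf, Finset.mul_sum, exp_sum]
  rw [integral_fintype_prod_eq_pow (fun x ↦ exp (l * x ^ 2)), ← mgf, mgf_sq_gaussianReal hl]

lemma measure_sum_sq_ge_le_exp_pi_gaussianReal {l : ℝ} (h0 : 0 ≤ l) (h1 : l ≤ 1 / 4)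
    (ε : ℝ) :
    (Measure.pi fun _ : ι ↦ gaussianReal 0 1).real {y | ε ≤ ∑ i, y i ^ 2}
      ≤ exp (-l * ε + Fintype.card ι * (l + 2 * l ^ 2)) := by
  have hmgf := mgf_sum_sq_pi_gaussianReal (ι := ι) (by linarith : l < 1 / 2)
  have hint : Integrable (fun y ↦ exp (l * ∑ i, y i ^ 2))
      (Measure.pi fun _ : ι ↦ gaussianReal 0 1) :=
    mgf_pos_iff.1 (hmgf ▸ pow_pos (inv_pos.2 (sqrt_pos.2 (by linarith))) _)
  calc _ ≤ exp (-l * ε) * (√(1 - 2 * l))⁻¹ ^ Fintype.card ι :=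
        hmgf ▸ measure_ge_le_exp_mul_mgf ε h0 hint
    _ ≤ exp (-l * ε) * exp (l + 2 * l ^ 2) ^ Fintype.card ι := by
        gcongr
        exact inv_sqrt_one_sub_two_mul_le_exp h0 h1
    _ = _ := by rw [← exp_nat_mul, ← exp_add]

lemma measure_norm_sq_ge_le_max_pi_gaussianReal {t : ℝ} (ht : 0 ≤ t) :
    (Measure.pi fun _ : ι ↦ gaussianReal 0 1).real
        {y | Fintype.card ι * (1 + t) ≤ ‖WithLp.toLp 2 y‖ ^ 2}
      ≤ max (exp (-Fintype.card ι * t / 8)) (exp (-Fintype.card ι * t ^ 2 / 8)) := by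
  have hm : (0 : ℝ) ≤ Fintype.card ι := Nat.cast_nonneg _
  simp only [PiLp.norm_sq_eq_of_L2, Real.norm_eq_abs, sq_abs]
  rcases le_total t 1 with h1 | h1
  · refine (measure_sum_sq_ge_le_exp_pi_gaussianReal (l := t / 4) (by linarith) (by linarith)
      _).trans (le_max_of_le_right (exp_le_exp.2 ?_))
    nlinarith
  · refine (measure_sum_sq_ge_le_exp_pi_gaussianReal (l := 1 / 4) (by norm_num) le_rfl _).trans
      (le_max_of_le_left (exp_le_exp.2 ?_))
    nlinarith

lemma hasSubgaussianMGF_dotProduct_pi_gaussianReal (a : ι → ℝ) :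
    HasSubgaussianMGF (fun x ↦ x ⬝ᵥ a) (‖WithLp.toLp 2 a‖₊ ^ 2)
      (Measure.pi fun _ : ι ↦ gaussianReal 0 1) := by
  have hcoord (i : ι) : HasSubgaussianMGF (fun x : ι → ℝ ↦ a i * x i) (‖a i‖₊ ^ 2)
      (Measure.pi fun _ : ι ↦ gaussianReal 0 1) := by
    refine HasSubgaussianMGF.of_map (X := fun u ↦ a i * u)
      (measurable_pi_apply i).aemeasurable ?_
    rw [(measurePreserving_eval (fun _ : ι ↦ gaussianReal 0 1) i).map_eq]
    convert (hasSubgaussianMGF_id_gaussianReal 1).const_mul (a i) using 2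
    · rfl
    · ext
      change _ = a i ^ 2 * ((1 : ℝ≥0) : ℝ)
      simp
  have hindep : iIndepFun (fun i (x : ι → ℝ) ↦ a i * x i)
      (Measure.pi fun _ : ι ↦ gaussianReal 0 1) :=
    iIndepFun_pi (X := fun i u ↦ a i * u) fun i ↦ by fun_prop
  rw [PiLp.nnnorm_eq_of_L2, NNReal.sq_sqrt]
  exact (HasSubgaussianMGF.sum_of_iIndepFun hindep fun i _ ↦ hcoord i).congr
    (ae_of_all _ fun x ↦ by simp [dotProduct, mul_comm])

lemma measure_dotProduct_gt_le_pi_gaussianReal {a : ι → ℝ} {σ s : ℝ}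
    (ha : ‖WithLp.toLp 2 a‖ ≤ σ) (hs : 0 ≤ s) :
    (Measure.pi fun _ : ι ↦ gaussianReal 0 1).real {x | σ * s < x ⬝ᵥ a} ≤ exp (-s ^ 2 / 2) := by
  have hσ : 0 ≤ σ := (norm_nonneg _).trans ha
  rcases (norm_nonneg (WithLp.toLp 2 a)).eq_or_lt with h0 | hpos
  · have hempty : {x : ι → ℝ | σ * s < x ⬝ᵥ a} = ∅ := by
      ext x
      simp [(WithLp.toLp_eq_zero 2).1 (norm_eq_zero.1 h0.symm), mul_nonneg hσ hs]
    simp [hempty, (exp_pos _).le]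
  calc _ ≤ (Measure.pi fun _ : ι ↦ gaussianReal 0 1).real {x | σ * s ≤ x ⬝ᵥ a} :=
        measureReal_mono fun _ ↦ le_of_lt (α := ℝ)
    _ ≤ exp (-(σ * s) ^ 2 / (2 * ‖WithLp.toLp 2 a‖ ^ 2)) := by
        simpa using
          (hasSubgaussianMGF_dotProduct_pi_gaussianReal a).measure_ge_le (mul_nonneg hσ hs)
    _ ≤ exp (-s ^ 2 / 2) := by
        rw [exp_le_exp, div_le_div_iff₀ (by positivity) two_pos]
        nlinarith [sq_nonneg s, mul_le_mul ha ha (norm_nonneg _) hσ]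

lemma measure_dotProduct_mulVec_gt_le_pi_gaussianReal {n : Type*} [Fintype n]
    [DecidableEq n] (Psi : Matrix ι n ℝ) {y : n → ℝ} {r s : ℝ} (hy : ‖WithLp.toLp 2 y‖ ≤ r)
    (hs : 0 ≤ s) :
    (Measure.pi fun _ : ι ↦ gaussianReal 0 1).real {x | ‖Psi‖ * r * s < x ⬝ᵥ (Psi *ᵥ y)}
      ≤ exp (-s ^ 2 / 2) :=
  measure_dotProduct_gt_le_pi_gaussianReal
    ((Psi.l2_opNorm_mulVec (WithLp.toLp 2 y)).trans (by gcongr)) hs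

end Pi

end ProbabilityTheory

/-- For independent standard Gaussian vectors `x, y` in `ℝ^m` and a fixed matrix `Ψ`,
with probability at least `1 - 2 max{e^{-mt/8}, e^{-mt²/8}}` one has
`xᵀ Ψ y ≤ m √(t(1+t)) ‖Ψ‖`: equivalently, the probability of the complementary event
is at most `2 max{e^{-mt/8}, e^{-mt²/8}}`. -/
theorem gaussian_bilinear_form_tail_bound
    {m : ℕ} (Psi : Matrix (Fin m) (Fin m) ℝ)
    (μ : Measure (Fin m → ℝ)) (hμ : μ = Measure.pi fun _ => gaussianReal 0 1)
    (t : ℝ) (ht : 0 ≤ t) :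
    ((μ.prod μ) {p | (m : ℝ) * Real.sqrt (t * (1 + t)) * ‖Psi‖ < p.1 ⬝ᵥ (Psi *ᵥ p.2)}).toReal
      ≤ 2 * max (Real.exp (-(m : ℝ) * t / 8)) (Real.exp (-(m : ℝ) * t ^ 2 / 8)) := by
  subst hμ
  have hm : (0 : ℝ) ≤ m := Nat.cast_nonneg m
  set M := max (exp (-(m : ℝ) * t / 8)) (exp (-(m : ℝ) * t ^ 2 / 8))
  have hradius : (m : ℝ) * √(t * (1 + t)) * ‖Psi‖ = ‖Psi‖ * √(m * (1 + t)) * √(m * t) := by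
    rw [mul_assoc ‖Psi‖, ← sqrt_mul (by positivity),
      show m * (1 + t) * (m * t) = m ^ 2 * (t * (1 + t)) by ring, sqrt_mul (sq_nonneg _),
      sqrt_sq hm]
    ring
  set A := {y : Fin m → ℝ | ‖WithLp.toLp 2 y‖ ^ 2 < m * (1 + t)}
  have hsection (y : Fin m → ℝ) (hy : y ∈ A) :
      (Measure.pi fun _ ↦ gaussianReal 0 1).real
        {x | (m : ℝ) * √(t * (1 + t)) * ‖Psi‖ < x ⬝ᵥ (Psi *ᵥ y)} ≤ exp (-(m * t) / 2) := by
    have h := measure_dotProduct_mulVec_gt_le_pi_gaussianReal Psi (le_sqrt_of_sq_le hy.le)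
      (sqrt_nonneg (m * t))
    rwa [← hradius, sq_sqrt (mul_nonneg hm ht)] at h
  have hchi := measure_norm_sq_ge_le_max_pi_gaussianReal (ι := Fin m) ht
  rw [Fintype.card_fin] at hchi
  calc _ ≤ exp (-(m * t) / 2) + (Measure.pi fun _ ↦ gaussianReal 0 1).real Aᶜ :=
        measureReal_prod_le_add_of_forall_mem (measurableSet_lt measurable_const (by fun_prop))
          (exp_pos _).le hsection
    _ ≤ M + M := by
        gcongr
        · exact le_max_of_le_left (exp_le_exp.2 (by nlinarith [mul_nonneg hm ht]))
        · exact hchi.trans' (measureReal_mono fun _ ↦ le_of_not_gt (α := ℝ))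
    _ = 2 * M := (two_mul M).symm
end
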